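/- The three-component 1D operator P of Dubrovin–Novikov type determined by the metric g = [[0,1,0],[1,0,0],[0,0,0]] and the nonzero coefficients b^{13}_3 = 1/(u^3 u^1 − u^2), b^{23}_3 = −u^3/(u^3 u^1 − u^2), b^{31}_3 = −1/(u^3 u^1 − u^2), b^{32}_3 = u^3/(u^3 u^1 − u^2) satisfies the skew-symmetry conditions g^{ij} = g^{ji}, ∂_k g^{ij} = b^{ij}_k + b^{ji}_k and the Jacobi-identity conditions of Grinberg for a 1D Hamiltonian operator of Dubrovin–Novikov type. -/

import Mathlib

open scoped BigOperators

/-- Partial derivative of `f` with respect to the `k`-th coordinate. -/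
noncomputable def pd {n : ℕ} (k : Fin n) (f : (Fin n → ℝ) → ℝ) (x : Fin n → ℝ) : ℝ :=
  fderiv ℝ f x (Pi.single k 1)

/-- The bracketed expression appearing in Mokhov's conditions (a5) and (a7). -/
noncomputable def mokA5 {d n : ℕ}
    (g : Fin d → Fin n → Fin n → (Fin n → ℝ) → ℝ)
    (b : Fin d → Fin n → Fin n → Fin n → (Fin n → ℝ) → ℝ)
    (α β : Fin d) (i j r q : Fin n) (x : Fin n → ℝ) : ℝ :=
  ∑ s, (g α s i x * (pd q (b β j r s) x - pd s (b β j r q) x)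
        + b α i j s x * b β s r q x - b α i r s x * b β s j q x)

/-- Mokhov's conditions (a1)–(a7) for a `d`-dimensional first-order Hamiltonian
operator of Dubrovin–Novikov type with metrics `g` and coefficients `b`, on a domain `U`. -/
def Mokhov (d n : ℕ) (U : Set (Fin n → ℝ))
    (g : Fin d → Fin n → Fin n → (Fin n → ℝ) → ℝ)
    (b : Fin d → Fin n → Fin n → Fin n → (Fin n → ℝ) → ℝ) : Prop :=
  -- (a1)
  (∀ x ∈ U, ∀ α i j, g α i j x = g α j i x) ∧
  -- (a2)
  (∀ x ∈ U, ∀ α i j k, pd k (g α i j) x = b α i j k x + b α j i k x) ∧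
  -- (a3)
  (∀ x ∈ U, ∀ α β i j r,
    (∑ s, (g α s i x * b β j r s x - g β s j x * b α i r s x))
      + (∑ s, (g β s i x * b α j r s x - g α s j x * b β i r s x)) = 0) ∧
  -- (a4)
  (∀ x ∈ U, ∀ α β i j r,
    (∑ s, (g α s i x * b β j r s x - g β s j x * b α i r s x))
      + (∑ s, (g α s j x * b β r i s x - g β s r x * b α j i s x))
      + (∑ s, (g α s r x * b β i j s x - g β s i x * b α r j s x)) = 0) ∧
  -- (a5)
  (∀ x ∈ U, ∀ α β i j r q,
    mokA5 g b α β i j r q x + mokA5 g b β α i j r q x = 0) ∧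
  -- (a6)
  (∀ x ∈ U, ∀ α β i j r q,
    ∑ s, (g β s i x * pd s (b α j r q) x
          - b β i j s x * b α s r q x - b β i r s x * b α j s q x)
    = ∑ s, (g α s j x * pd s (b β i r q) x
          - b α j i s x * b β s r q x - b β i s q x * b α j r s x)) ∧
  -- (a7)
  (∀ x ∈ U, ∀ α β i j r q k,
    pd k (mokA5 g b α β i j r q) x
    + ((∑ s, b β s i q x * (pd s (b α j r k) x - pd k (b α j r s) x))
       + (∑ s, b β s j q x * (pd s (b α r i k) x - pd k (b α r i s) x))
       + (∑ s, b β s r q x * (pd s (b α i j k) x - pd k (b α i j s) x)))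
    + pd q (mokA5 g b β α i j r k) x
    + ((∑ s, b α s i k x * (pd s (b β j r q) x - pd q (b β j r s) x))
       + (∑ s, b α s j k x * (pd s (b β r i q) x - pd q (b β r i s) x))
       + (∑ s, b α s r k x * (pd s (b β i j q) x - pd q (b β i j s) x))) = 0)

noncomputable def dD (q : Fin 3) (x : Fin 3 → ℝ) : ℝ :=
  if q = 0 then x 2 else if q = 1 then -1 else x 0

/-- The b-coefficients as explicit functions. -/
noncomputable def bfun (i j k : Fin 3) (x : Fin 3 → ℝ) : ℝ :=
  if i = 0 ∧ j = 2 ∧ k = 2 then 1 / (x 2 * x 0 - x 1)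
  else if i = 1 ∧ j = 2 ∧ k = 2 then -(x 2 / (x 2 * x 0 - x 1))
  else if i = 2 ∧ j = 0 ∧ k = 2 then -(1 / (x 2 * x 0 - x 1))
  else if i = 2 ∧ j = 1 ∧ k = 2 then x 2 / (x 2 * x 0 - x 1)
  else 0

/-- The metric as explicit (constant) functions. -/
noncomputable def gfun (i j : Fin 3) (_ : Fin 3 → ℝ) : ℝ :=
  if (i = 0 ∧ j = 1) ∨ (i = 1 ∧ j = 0) then 1 else 0

/-- Explicit partial derivatives of the b-coefficients. -/
noncomputable def pdB (q i j k : Fin 3) (x : Fin 3 → ℝ) : ℝ :=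
  if k = 2 then
    if i = 0 ∧ j = 2 then -(dD q x / (x 2 * x 0 - x 1) ^ 2)
    else if i = 1 ∧ j = 2 then
      x 2 * dD q x / (x 2 * x 0 - x 1) ^ 2 - (if q = 2 then (x 2 * x 0 - x 1)⁻¹ else 0)
    else if i = 2 ∧ j = 0 then dD q x / (x 2 * x 0 - x 1) ^ 2
    else if i = 2 ∧ j = 1 then
      (if q = 2 then (x 2 * x 0 - x 1)⁻¹ else 0) - x 2 * dD q x / (x 2 * x 0 - x 1) ^ 2
    else 0
  else 0

lemma hasL (x : Fin 3 → ℝ) :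
    HasFDerivAt (fun y : Fin 3 → ℝ => y 2 * y 0 - y 1)
      ((x 2 • ContinuousLinearMap.proj 0 + x 0 • ContinuousLinearMap.proj 2
        - ContinuousLinearMap.proj 1 : (Fin 3 → ℝ) →L[ℝ] ℝ)) x :=
  ((ContinuousLinearMap.proj (R := ℝ) (φ := fun _ : Fin 3 => ℝ) 2).hasFDerivAt.mul
    (ContinuousLinearMap.proj 0).hasFDerivAt).sub
    (ContinuousLinearMap.proj 1).hasFDerivAt

lemma hasInvL (x : Fin 3 → ℝ) (hx : x 2 * x 0 - x 1 ≠ 0) :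
    HasFDerivAt (fun y : Fin 3 → ℝ => (y 2 * y 0 - y 1)⁻¹)
      ((ContinuousLinearMap.smulRight (1 : ℝ →L[ℝ] ℝ) (-((x 2 * x 0 - x 1) ^ 2)⁻¹)).comp
        (x 2 • ContinuousLinearMap.proj 0 + x 0 • ContinuousLinearMap.proj 2
          - ContinuousLinearMap.proj 1 : (Fin 3 → ℝ) →L[ℝ] ℝ)) x :=
  (hasFDerivAt_inv hx).comp x (hasL x)

lemma hasF (x : Fin 3 → ℝ) (hx : x 2 * x 0 - x 1 ≠ 0) :
    HasFDerivAt (fun y : Fin 3 → ℝ => 1 / (y 2 * y 0 - y 1))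
      ((ContinuousLinearMap.smulRight (1 : ℝ →L[ℝ] ℝ) (-((x 2 * x 0 - x 1) ^ 2)⁻¹)).comp
        (x 2 • ContinuousLinearMap.proj 0 + x 0 • ContinuousLinearMap.proj 2
          - ContinuousLinearMap.proj 1 : (Fin 3 → ℝ) →L[ℝ] ℝ)) x := by
  simpa [one_div] using hasInvL x hx

lemma hasH (x : Fin 3 → ℝ) (hx : x 2 * x 0 - x 1 ≠ 0) :
    HasFDerivAt (fun y : Fin 3 → ℝ => y 2 / (y 2 * y 0 - y 1))
      (x 2 • ((ContinuousLinearMap.smulRight (1 : ℝ →L[ℝ] ℝ) (-((x 2 * x 0 - x 1) ^ 2)⁻¹)).comp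
        (x 2 • ContinuousLinearMap.proj 0 + x 0 • ContinuousLinearMap.proj 2
          - ContinuousLinearMap.proj 1 : (Fin 3 → ℝ) →L[ℝ] ℝ))
       + (x 2 * x 0 - x 1)⁻¹ • (ContinuousLinearMap.proj 2 : (Fin 3 → ℝ) →L[ℝ] ℝ)) x := by
  simpa [div_eq_mul_inv] using
    (ContinuousLinearMap.proj (R := ℝ) (φ := fun _ : Fin 3 => ℝ) 2).hasFDerivAt.fun_mul
      (hasInvL x hx)

lemma pdF (x : Fin 3 → ℝ) (hx : x 2 * x 0 - x 1 ≠ 0) (q : Fin 3) :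
    pd q (fun y => (y 2 * y 0 - y 1)⁻¹) x = -(dD q x / (x 2 * x 0 - x 1) ^ 2) := by
  rw [pd, (hasInvL x hx).fderiv]
  fin_cases q <;> simp [dD, Pi.single_apply] <;> ring

lemma pdFneg (x : Fin 3 → ℝ) (hx : x 2 * x 0 - x 1 ≠ 0) (q : Fin 3) :
    pd q (fun y => -(y 2 * y 0 - y 1)⁻¹) x = dD q x / (x 2 * x 0 - x 1) ^ 2 := by
  rw [pd, (hasInvL x hx).fun_neg.fderiv]
  fin_cases q <;> simp [dD, Pi.single_apply] <;> ring

lemma pdH (x : Fin 3 → ℝ) (hx : x 2 * x 0 - x 1 ≠ 0) (q : Fin 3) :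
    pd q (fun y => y 2 / (y 2 * y 0 - y 1)) x =
      (if q = 2 then (x 2 * x 0 - x 1)⁻¹ else 0) - x 2 * dD q x / (x 2 * x 0 - x 1) ^ 2 := by
  rw [pd, (hasH x hx).fderiv]
  fin_cases q <;> simp [dD, Pi.single_apply] <;> field_simp <;> ring

lemma pdHneg (x : Fin 3 → ℝ) (hx : x 2 * x 0 - x 1 ≠ 0) (q : Fin 3) :
    pd q (fun y => -(y 2 / (y 2 * y 0 - y 1))) x =
      x 2 * dD q x / (x 2 * x 0 - x 1) ^ 2 - (if q = 2 then (x 2 * x 0 - x 1)⁻¹ else 0) := by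
  rw [pd, (hasH x hx).fun_neg.fderiv]
  fin_cases q <;> simp [dD, Pi.single_apply] <;> field_simp <;> ring

lemma pd_zero (x : Fin 3 → ℝ) (q : Fin 3) :
    pd q (fun _ : Fin 3 → ℝ => (0:ℝ)) x = 0 := by simp [pd]

lemma bfun_eq (i j k : Fin 3) : bfun i j k = fun x =>
    if i = 0 ∧ j = 2 ∧ k = 2 then 1 / (x 2 * x 0 - x 1)
    else if i = 1 ∧ j = 2 ∧ k = 2 then -(x 2 / (x 2 * x 0 - x 1))
    else if i = 2 ∧ j = 0 ∧ k = 2 then -(1 / (x 2 * x 0 - x 1))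
    else if i = 2 ∧ j = 1 ∧ k = 2 then x 2 / (x 2 * x 0 - x 1)
    else 0 := rfl

lemma pd_bfun (x : Fin 3 → ℝ) (hx : x 2 * x 0 - x 1 ≠ 0) (q i j k : Fin 3) :
    pd q (bfun i j k) x = pdB q i j k x := by
  fin_cases i <;> fin_cases j <;> fin_cases k <;> simp only [bfun_eq, pdB] <;>
    norm_num <;>
    first
      | exact pd_zero x q
      | exact pdF x hx q
      | exact pdFneg x hx q
      | exact pdH x hx q
      | exact pdHneg x hx q

lemma gfun_const (i j : Fin 3) :
    gfun i j = fun _ => if (i = 0 ∧ j = 1) ∨ (i = 1 ∧ j = 0) then (1:ℝ) else 0 := rfl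

lemma pd_const {n : ℕ} (k : Fin n) (c : ℝ) (x : Fin n → ℝ) :
    pd k (fun _ => c) x = 0 := by simp [pd]

set_option maxHeartbeats 0

/-- the third canonical rank-2 three-component 1D degenerate operator,
with metric [[0,1,0],[1,0,0],[0,0,0]] and b¹³₃ = 1/(u³u¹-u²), b²³₃ = -u³/(u³u¹-u²),
b³¹₃ = -1/(u³u¹-u²), b³²₃ = u³/(u³u¹-u²), satisfies Grinberg's conditions
(Mokhov's conditions with d = 1) on the domain u³u¹ - u² ≠ 0. -/
theorem stmt19
    (g : Fin 1 → Fin 3 → Fin 3 → (Fin 3 → ℝ) → ℝ)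
    (b : Fin 1 → Fin 3 → Fin 3 → Fin 3 → (Fin 3 → ℝ) → ℝ)
    (hg : ∀ i j x, g 0 i j x =
      if (i = 0 ∧ j = 1) ∨ (i = 1 ∧ j = 0) then 1 else 0)
    (hb : ∀ i j k x, b 0 i j k x =
      if i = 0 ∧ j = 2 ∧ k = 2 then 1 / (x 2 * x 0 - x 1)
      else if i = 1 ∧ j = 2 ∧ k = 2 then -(x 2 / (x 2 * x 0 - x 1))
      else if i = 2 ∧ j = 0 ∧ k = 2 then -(1 / (x 2 * x 0 - x 1))
      else if i = 2 ∧ j = 1 ∧ k = 2 then x 2 / (x 2 * x 0 - x 1)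
      else 0) :
    Mokhov 1 3 {x | x 2 * x 0 - x 1 ≠ 0} g b := by
  have hbf : ∀ i j k, b 0 i j k = bfun i j k := fun i j k => funext fun y => hb i j k y
  have hgf : ∀ i j, g 0 i j = gfun i j := fun i j => funext fun y => hg i j y
  have mokzero : ∀ y : Fin 3 → ℝ, y 2 * y 0 - y 1 ≠ 0 → ∀ i j r q : Fin 3,
      mokA5 g b 0 0 i j r q y = 0 := by
    intro y hy i j r q
    fin_cases i <;> fin_cases j <;> fin_cases r <;> fin_cases q <;>
      (simp only [mokA5, Fin.sum_univ_three, hbf, pd_bfun y hy];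
       simp [bfun, pdB, dD, hg, hb];
       try field_simp;
       try ring)
  have hU : IsOpen {y : Fin 3 → ℝ | y 2 * y 0 - y 1 ≠ 0} := by
    have hc : Continuous fun y : Fin 3 → ℝ => y 2 * y 0 - y 1 :=
      ((continuous_apply 2).mul (continuous_apply 0)).sub (continuous_apply 1)
    exact isOpen_ne.preimage hc
  have pdmok : ∀ x : Fin 3 → ℝ, x 2 * x 0 - x 1 ≠ 0 → ∀ k i j r q : Fin 3,
      pd k (mokA5 g b 0 0 i j r q) x = 0 := by
    intro x hx k i j r q
    have hev : mokA5 g b 0 0 i j r q =ᶠ[nhds x] fun _ => (0:ℝ) :=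
      Filter.eventuallyEq_of_mem (hU.mem_nhds hx) fun y hy => mokzero y hy i j r q
    rw [pd, hev.fderiv_eq]
    simp
  refine ⟨?_, ?_, ?_, ?_, ?_, ?_, ?_⟩
  · -- (a1)
    intro x _ α i j
    obtain rfl : α = 0 := Subsingleton.elim α 0
    rw [hg, hg]
    exact if_congr (by tauto) rfl rfl
  · -- (a2)
    intro x hx α i j k
    obtain rfl : α = 0 := Subsingleton.elim α 0
    rw [hgf, gfun_const, pd_const]
    fin_cases i <;> fin_cases j <;> fin_cases k <;> simp [hb] <;> try ring
  · -- (a3)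
    intro x hx α β i j r
    obtain rfl : α = 0 := Subsingleton.elim α 0
    obtain rfl : β = 0 := Subsingleton.elim β 0
    fin_cases i <;> fin_cases j <;> fin_cases r <;>
      (simp [Fin.sum_univ_three, hg, hb]; try field_simp; try ring)
  · -- (a4)
    intro x hx α β i j r
    obtain rfl : α = 0 := Subsingleton.elim α 0
    obtain rfl : β = 0 := Subsingleton.elim β 0
    fin_cases i <;> fin_cases j <;> fin_cases r <;>
      (simp [Fin.sum_univ_three, hg, hb]; try field_simp; try ring)
  · -- (a5)
    intro x hx α β i j r q
    obtain rfl : α = 0 := Subsingleton.elim α 0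
    obtain rfl : β = 0 := Subsingleton.elim β 0
    rw [mokzero x hx]
    norm_num
  · -- (a6)
    intro x hx α β i j r q
    obtain rfl : α = 0 := Subsingleton.elim α 0
    obtain rfl : β = 0 := Subsingleton.elim β 0
    fin_cases i <;> fin_cases j <;> fin_cases r <;> fin_cases q <;>
      (simp only [Fin.sum_univ_three, hbf, pd_bfun x hx];
       simp [bfun, pdB, dD, hg, hb];
       try field_simp;
       try ring)
  · -- (a7)
    intro x hx α β i j r q k
    obtain rfl : α = 0 := Subsingleton.elim α 0
    obtain rfl : β = 0 := Subsingleton.elim β 0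
    rw [pdmok x hx k i j r q, pdmok x hx q i j r k]
    fin_cases i <;> fin_cases j <;> fin_cases r <;> fin_cases q <;> fin_cases k <;>
      (simp only [Fin.sum_univ_three, hbf, pd_bfun x hx];
       simp [bfun, pdB, dD, hb];
       try field_simp;
       try ring;
       try tauto)
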